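/- Fix an integer N ≥ 2 and a real number q with 0 < q < 1. Let m ≥ 3 be an odd integer and let λ be an integer coprime to m with λ ≢ m−1 (mod m). Let β be an integer with βλ ≡ 1 (mod m), and assume gcd(β+1, m) = 1. Then for every x ∈ ℂ \ {0} at which all theta factors occurring are nonzero, ∏_{k=1}^{m} U(q^{−N(λ+1)k/m} x) / U(q^{−Nλk/m} x) = 1. (This is the vanishing of the exchange function of the generator t_{m,−m}(z) with L(w) on the surface S_{m,−m} with c = −N/m and −p^{1/2} = q^{Nλ/m}, yielding the localized extension of the center of A_{q,p}(gl(N)_c).) -/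

import Mathlib

/-- Infinite `q`-Pochhammer symbol `(z;p)_∞ = ∏_{j≥0} (1 − z pʲ)`. -/
noncomputable def qPoch (z p : ℂ) : ℂ := ∏' j : ℕ, (1 - z * p ^ j)

/-- Jacobi Θ function `Θ_p(z) = (z;p)_∞ (p z⁻¹;p)_∞ (p;p)_∞`. -/
noncomputable def ThetaF (p z : ℂ) : ℂ := qPoch z p * qPoch (p * z⁻¹) p * qPoch p p

/-- The function
`U(z) = q^{2/N−2} · Θ_{q^{2N}}(q²z²) Θ_{q^{2N}}(q²z⁻²) / (Θ_{q^{2N}}(z²) Θ_{q^{2N}}(z⁻²))`. -/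
noncomputable def Ufun (N : ℕ) (q : ℝ) (z : ℂ) : ℂ :=
  ((q ^ ((2 : ℝ) / N - 2) : ℝ) : ℂ) *
    (ThetaF ((q : ℂ) ^ (2 * N)) ((q : ℂ) ^ 2 * z ^ 2) *
      ThetaF ((q : ℂ) ^ (2 * N)) ((q : ℂ) ^ 2 * z⁻¹ ^ 2)) /
    (ThetaF ((q : ℂ) ^ (2 * N)) (z ^ 2) * ThetaF ((q : ℂ) ^ (2 * N)) (z⁻¹ ^ 2))

/-- All four theta factors occurring in `U(z)` are nonzero. -/
def thetaReg (N : ℕ) (q : ℝ) (z : ℂ) : Prop :=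
  ThetaF ((q : ℂ) ^ (2 * N)) ((q : ℂ) ^ 2 * z ^ 2) ≠ 0 ∧
  ThetaF ((q : ℂ) ^ (2 * N)) ((q : ℂ) ^ 2 * z⁻¹ ^ 2) ≠ 0 ∧
  ThetaF ((q : ℂ) ^ (2 * N)) (z ^ 2) ≠ 0 ∧
  ThetaF ((q : ℂ) ^ (2 * N)) (z⁻¹ ^ 2) ≠ 0

/-!
Under `z ↦ q^N z` the arguments `z²` and `z⁻²` of the theta functions in `U` move by `p = q^{2N}`
and `p⁻¹`, and the quasi-periodicity `Θ_p(p w) = -w⁻¹ Θ_p(w)` produces the same factor `p⁻¹ z⁻⁴`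
in the numerator and in the denominator. So `U` is invariant under `z ↦ q^N z`, i.e.
`j ↦ U(q^{-Nj/m} x)` is `m`-periodic on `ℤ`. Both `λ` and `λ + 1 ≡ λ(β + 1)` are units mod `m`,
so `k ↦ λk` and `k ↦ (λ + 1)k` permute the residues mod `m`: numerator and denominator are the
same product, which is nonzero at a regular point.
-/

open Complex Finset

theorem multipliable_one_sub_mul_pow (z : ℂ) {p : ℂ} (hp : ‖p‖ < 1) :
    Multipliable fun j : ℕ => 1 - z * p ^ j := by
  simpa only [sub_eq_add_neg] using Complex.multipliable_one_add_of_summable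
    ((summable_geometric_of_norm_lt_one hp).mul_left z).neg

theorem qPoch_eq_one_sub_mul (z : ℂ) {p : ℂ} (hp : ‖p‖ < 1) :
    qPoch z p = (1 - z) * qPoch (p * z) p := by
  have htail : Multipliable fun j : ℕ => 1 - z * p ^ (j + 1) :=
    (multipliable_one_sub_mul_pow (p * z) hp).congr fun j => by ring
  rw [qPoch, qPoch, tprod_eq_zero_mul' (f := fun j => 1 - z * p ^ j) htail, pow_zero, mul_one]
  exact congrArg _ (tprod_congr fun j => by ring)

theorem ThetaF_mul_left {p z : ℂ} (hp0 : p ≠ 0) (hp : ‖p‖ < 1) (hz : z ≠ 0) :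
    ThetaF p (p * z) = -z⁻¹ * ThetaF p z := by
  have hinv : p * (p * z)⁻¹ = z⁻¹ := by field_simp
  rw [ThetaF, ThetaF, hinv, qPoch_eq_one_sub_mul z hp, qPoch_eq_one_sub_mul z⁻¹ hp]
  field_simp
  ring

theorem ThetaF_inv_mul {p z : ℂ} (hp0 : p ≠ 0) (hp : ‖p‖ < 1) (hz : z ≠ 0) :
    ThetaF p (p⁻¹ * z) = -(p⁻¹ * z) * ThetaF p z := by
  have h := ThetaF_mul_left hp0 hp (mul_ne_zero (inv_ne_zero hp0) hz)
  rw [mul_inv_cancel_left₀ hp0] at h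
  rw [h]
  field_simp

theorem ThetaF_mul_ThetaF_inv_mul_left {p a w : ℂ} (hp0 : p ≠ 0) (hp : ‖p‖ < 1) (ha : a ≠ 0)
    (hw : w ≠ 0) :
    ThetaF p (a * (p * w)) * ThetaF p (a * (p * w)⁻¹)
      = (p * w ^ 2)⁻¹ * (ThetaF p (a * w) * ThetaF p (a * w⁻¹)) := by
  rw [show a * (p * w) = p * (a * w) by ring, show a * (p * w)⁻¹ = p⁻¹ * (a * w⁻¹) by
    field_simp, ThetaF_mul_left hp0 hp (mul_ne_zero ha hw),
    ThetaF_inv_mul hp0 hp (mul_ne_zero ha (inv_ne_zero hw))]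
  field_simp

theorem Ufun_pow_mul {N : ℕ} (hN : 0 < N) {q : ℝ} (hq0 : q ≠ 0) (hq1 : |q| < 1) (z : ℂ) :
    Ufun N q ((q : ℂ) ^ N * z) = Ufun N q z := by
  rcases eq_or_ne z 0 with rfl | hz
  · rw [mul_zero]
  set p : ℂ := (q : ℂ) ^ (2 * N)
  have hp0 : p ≠ 0 := pow_ne_zero _ (ofReal_ne_zero.2 hq0)
  have hp : ‖p‖ < 1 := by
    rw [norm_pow, norm_real, Real.norm_eq_abs]
    exact pow_lt_one₀ (abs_nonneg q) hq1 (by omega)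
  have hw : z ^ 2 ≠ 0 := pow_ne_zero _ hz
  have hsq : ((q : ℂ) ^ N * z) ^ 2 = p * z ^ 2 := by ring
  have hden := ThetaF_mul_ThetaF_inv_mul_left hp0 hp one_ne_zero hw
  simp only [one_mul] at hden
  simp only [Ufun, inv_pow, hsq]
  have hc : (p * (z ^ 2) ^ 2)⁻¹ ≠ 0 := inv_ne_zero (mul_ne_zero hp0 (pow_ne_zero 2 hw))
  rw [ThetaF_mul_ThetaF_inv_mul_left hp0 hp (pow_ne_zero 2 (ofReal_ne_zero.2 hq0)) hw, hden,
    mul_div_assoc, mul_div_mul_left _ _ hc, ← mul_div_assoc]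

theorem periodic_Ufun_rpow_mul {N : ℕ} (hN : 0 < N) {q : ℝ} (hq0 : 0 < q) (hq1 : q < 1)
    {m : ℤ} (hm : m ≠ 0) (x : ℂ) :
    Function.Periodic (fun j : ℤ => Ufun N q (((q ^ (-(N : ℝ) * j / m) : ℝ) : ℂ) * x)) m := by
  intro j
  have hshift : ((q ^ (-(N : ℝ) * j / m) : ℝ) : ℂ)
      = (q : ℂ) ^ N * ((q ^ (-(N : ℝ) * ((j + m : ℤ) : ℝ) / m) : ℝ) : ℂ) := by
    rw [← ofReal_pow, ← ofReal_mul, ← Real.rpow_natCast, ← Real.rpow_add hq0]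
    congr 2
    field_simp
    push_cast
    ring
  simp only [hshift, mul_assoc,
    Ufun_pow_mul hN hq0.ne' (by rwa [abs_of_pos hq0])]

theorem Function.Periodic.prod_Icc_mul {M : Type*} [CommMonoid M] {F : ℤ → M} {a m : ℤ}
    (hF : Function.Periodic F m) (hm : 0 < m) (ha : IsCoprime a m) :
    ∏ k ∈ Icc 1 m, F (a * k) = ∏ r ∈ Ico 0 m, F r := by
  have hmaps : ∀ k ∈ Icc 1 m, a * k % m ∈ Ico 0 m := fun k _ =>
    mem_Ico.2 ⟨Int.emod_nonneg _ hm.ne', Int.emod_lt_of_pos _ hm⟩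
  have hinj : Set.InjOn (fun k => a * k % m) (Icc 1 m) := by
    intro k₁ hk₁ k₂ hk₂ h
    simp only [coe_Icc, Set.mem_Icc] at hk₁ hk₂
    have hdvd : m ∣ k₂ - k₁ :=
      ha.symm.dvd_of_dvd_mul_left (by simpa only [mul_sub] using Int.ModEq.dvd h)
    have := Int.eq_zero_of_abs_lt_dvd hdvd (by rw [abs_sub_lt_iff]; omega)
    omega
  have hcard : #(Ico 0 m) ≤ #(Icc 1 m) := by
    rw [Int.card_Ico, Int.card_Icc]; omega
  refine prod_nbij _ hmaps hinj (surjOn_of_injOn_of_card_le _ hmaps hinj hcard) fun k _ => ?_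
  simpa only [Int.cast_id, Int.emod_def, mul_comm m] using (hF.sub_int_mul_eq (a * k / m)).symm

theorem isCoprime_add_one_of_mul_modEq_one {l b m : ℤ} (hl : IsCoprime l m)
    (hb : b * l ≡ 1 [ZMOD m]) (hb1 : IsCoprime (b + 1) m) : IsCoprime (l + 1) m := by
  obtain ⟨c, hc⟩ := hb.dvd
  have hsum : l * (b + 1) + m * c = l + 1 := by linear_combination -hc
  simpa only [hsum] using (hl.mul_left hb1).add_mul_left_left c

theorem Ufun_ne_zero {N : ℕ} {q : ℝ} (hq : 0 < q) {z : ℂ} (hz : thetaReg N q z) :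
    Ufun N q z ≠ 0 :=
  div_ne_zero (mul_ne_zero (ofReal_ne_zero.2 (Real.rpow_pos_of_pos hq _).ne')
    (mul_ne_zero hz.1 hz.2.1)) (mul_ne_zero hz.2.2.1 hz.2.2.2)

theorem localized_center_general (N : ℕ) (hN : 2 ≤ N) (q : ℝ) (hq0 : 0 < q) (hq1 : q < 1)
    (m : ℤ) (hm : 3 ≤ m)
    (l : ℤ) (hcop : IsCoprime l m)
    (b : ℤ) (hb : b * l ≡ 1 [ZMOD m]) (hb1 : IsCoprime (b + 1) m)
    (x : ℂ)
    (hreg1 : ∀ k ∈ Finset.Icc (1 : ℤ) m,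
      thetaReg N q (((q ^ (-(N : ℝ) * ((l : ℝ) + 1) * (k : ℝ) / (m : ℝ)) : ℝ) : ℂ) * x)) :
    ∏ k ∈ Finset.Icc (1 : ℤ) m,
      Ufun N q (((q ^ (-(N : ℝ) * ((l : ℝ) + 1) * (k : ℝ) / (m : ℝ)) : ℝ) : ℂ) * x) /
        Ufun N q (((q ^ (-(N : ℝ) * (l : ℝ) * (k : ℝ) / (m : ℝ)) : ℝ) : ℂ) * x) = 1 := by
  have hm0 : 0 < m := by omega
  have hF := periodic_Ufun_rpow_mul (by omega : 0 < N) hq0 hq1 hm0.ne' x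
  have hnum := hF.prod_Icc_mul hm0 (isCoprime_add_one_of_mul_modEq_one hcop hb hb1)
  have hden := hF.prod_Icc_mul hm0 hcop
  push_cast [← mul_assoc] at hnum hden
  have hne : ∏ k ∈ Icc 1 m,
      Ufun N q (((q ^ (-(N : ℝ) * ((l : ℝ) + 1) * (k : ℝ) / (m : ℝ)) : ℝ) : ℂ) * x) ≠ 0 :=
    prod_ne_zero_iff.2 fun k hk => Ufun_ne_zero hq0 (hreg1 k hk)
  rw [prod_div_distrib, hden, ← hnum, div_self hne]

/-- Localized extension of the center: for `m ≥ 3` odd, `λ` coprime to `m` with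
`λ ≢ m−1 (mod m)`, and `β` with `βλ ≡ 1 (mod m)` and `gcd(β+1,m) = 1`, the exchange
function of `t_{m,−m}(z)` with `L(w)` is trivial:
`∏_{k=1}^{m} U(q^{−N(λ+1)k/m} x) / U(q^{−Nλk/m} x) = 1`,
at every nonzero `x` where all theta factors occurring are nonzero. -/
theorem localized_center (N : ℕ) (hN : 2 ≤ N) (q : ℝ) (hq0 : 0 < q) (hq1 : q < 1)
    (m : ℤ) (hm : 3 ≤ m) (hmodd : Odd m)
    (l : ℤ) (hcop : IsCoprime l m) (hlm : ¬ l ≡ m - 1 [ZMOD m])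
    (b : ℤ) (hb : b * l ≡ 1 [ZMOD m]) (hb1 : IsCoprime (b + 1) m)
    (x : ℂ) (hx : x ≠ 0)
    (hreg1 : ∀ k ∈ Finset.Icc (1 : ℤ) m,
      thetaReg N q (((q ^ (-(N : ℝ) * ((l : ℝ) + 1) * (k : ℝ) / (m : ℝ)) : ℝ) : ℂ) * x))
    (hreg2 : ∀ k ∈ Finset.Icc (1 : ℤ) m,
      thetaReg N q (((q ^ (-(N : ℝ) * (l : ℝ) * (k : ℝ) / (m : ℝ)) : ℝ) : ℂ) * x)) :
    ∏ k ∈ Finset.Icc (1 : ℤ) m,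
      Ufun N q (((q ^ (-(N : ℝ) * ((l : ℝ) + 1) * (k : ℝ) / (m : ℝ)) : ℝ) : ℂ) * x) /
        Ufun N q (((q ^ (-(N : ℝ) * (l : ℝ) * (k : ℝ) / (m : ℝ)) : ℝ) : ℂ) * x) = 1 :=
  localized_center_general N hN q hq0 hq1 m hm l hcop b hb hb1 x hreg1
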